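/- Let a > 0, C_α > 0, δ ∈ [1/4, 1/2), and n ∈ ℕ. For ε > 0 set b = −(2 + ε)a and α(ε) = C_α ε^δ. Then as ε → 0⁺, the modulus of the OWR convergence factor with overlap n at s = 0 and β = −α satisfies |ρ_n(0, α(ε), −α(ε))| = 1 − (4/C_α) ε^{1/2 − δ} + O(ε^{1 − 2δ}); in particular the leading asymptotic behavior at ω = 0 is independent of the overlap n. -/
import Mathlib

set_option maxHeartbeats 1000000

/-- `λ₁(0) = (2 + ε + √(4ε + ε²))/2`, the real root greater than 1 of
`a y² + b y + a = 0` with `b = -(2 + ε)a`. -/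
noncomputable def lam1Zero (ε : ℝ) : ℝ :=
  (2 + ε + Real.sqrt (4 * ε + ε ^ 2)) / 2

/-- For `a > 0`, `C_α > 0`, `δ ∈ [1/4, 1/2)` and any overlap `n ∈ ℕ`, with
`b = -(2 + ε)a` and `α(ε) = C_α ε^δ`, the modulus of the OWR convergence factor at `s = 0`
with `β = -α`, namely
`|ρ_n(0,α,-α)| = ((α+1-λ₁(0))/((1+α)λ₁(0)-1))² (1/λ₁(0)²)ⁿ`, satisfies
`|ρ_n(0, α(ε), -α(ε))| = 1 - (4/C_α) ε^{1/2-δ} + O(ε^{1-2δ})` as `ε → 0⁺`;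
the leading behavior is independent of the overlap `n`. -/
theorem rhon_at_zero_asymptotics (a Cα δ : ℝ) (n : ℕ) (ha : 0 < a) (hC : 0 < Cα)
    (hδ1 : 1 / 4 ≤ δ) (hδ2 : δ < 1 / 2) :
    ∃ C > (0 : ℝ), ∃ ε₀ > (0 : ℝ), ∀ ε : ℝ, 0 < ε → ε < ε₀ →
      |((Cα * ε ^ δ + 1 - lam1Zero ε) / ((1 + Cα * ε ^ δ) * lam1Zero ε - 1)) ^ 2
          * (1 / (lam1Zero ε) ^ 2) ^ n
        - (1 - (4 / Cα) * ε ^ (1 / 2 - δ))| ≤ C * ε ^ (1 - 2 * δ) := by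
  have hδ0 : (0:ℝ) ≤ δ := by linarith
  have hCne := hC.ne'
  have hK2pos : (0:ℝ) < 32*(1+Cα)^2/Cα^3 + 24/Cα + 32/Cα^2 + 8 := by
    have h1 : 0 < 32*(1+Cα)^2 / Cα^3 := div_pos (by positivity) (pow_pos hC 3)
    have h2 : 0 < 24/Cα := div_pos (by norm_num) hC
    have h3 : 0 < 32/Cα^2 := div_pos (by norm_num) (pow_pos hC 2)
    linarith only [h1, h2, h3]
  have hCpos : (0:ℝ) < 8*(n:ℝ) + (32*(1+Cα)^2/Cα^3 + 24/Cα + 32/Cα^2 + 8) + 4/Cα := by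
    have h4 : 0 < 4/Cα := div_pos (by norm_num) hC
    have hn : (0:ℝ) ≤ (n:ℝ) := Nat.cast_nonneg n
    linarith only [hK2pos, h4, hn]
  refine ⟨8*(n:ℝ) + (32*(1+Cα)^2/Cα^3 + 24/Cα + 32/Cα^2 + 8) + 4/Cα, hCpos, 1, one_pos, ?_⟩
  intro ε hε hε1
  set e := Real.sqrt ε with he
  have he0 : 0 < e := Real.sqrt_pos.2 hε
  have he2 : e^2 = ε := Real.sq_sqrt hε.le
  have he1 : e ≤ 1 := Real.sqrt_le_one.mpr hε1.le
  have hεe : ε ≤ e := by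
    have h := mul_le_mul_of_nonneg_left he1 he0.le
    linarith only [h, he2]
  have herpow : e = ε ^ ((1:ℝ)/2) := Real.sqrt_eq_rpow ε
  set A := Cα * ε ^ δ with hA
  have hεδ0 : 0 < ε ^ δ := Real.rpow_pos_of_pos hε δ
  have hA0 : 0 < A := by rw [hA]; exact mul_pos hC hεδ0
  have hεδ1 : ε ^ δ ≤ 1 := Real.rpow_le_one hε.le hε1.le hδ0
  have hA1 : A ≤ Cα := by
    have := mul_le_mul_of_nonneg_left hεδ1 hC.le
    rw [hA]; linarith only [this]
  set P := ε ^ (1 - 2*δ) with hPd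
  have hP0 : 0 < P := Real.rpow_pos_of_pos hε _
  clear_value e A P
  have heP : e ≤ P := by
    rw [herpow, hPd]
    exact Real.rpow_le_rpow_of_exponent_ge hε hε1.le (by linarith)
  have h32P : ε ^ ((3:ℝ)/2 - 3*δ) ≤ P := by
    rw [hPd]
    exact Real.rpow_le_rpow_of_exponent_ge hε hε1.le (by linarith)
  -- rpow splittings
  have hεsplit2 : ε = ε^(1 - 2*δ) * (ε^δ)^2 := by
    conv_lhs => rw [← Real.rpow_one ε]
    rw [← Real.rpow_natCast (ε^δ) 2, ← Real.rpow_mul hε.le, ← Real.rpow_add hε]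
    congr 1; push_cast; ring
  have he3split : e^3 = ε^((3:ℝ)/2 - 3*δ) * (ε^δ)^3 := by
    rw [herpow, ← Real.rpow_natCast (ε^((1:ℝ)/2)) 3, ← Real.rpow_mul hε.le,
      ← Real.rpow_natCast (ε^δ) 3, ← Real.rpow_mul hε.le, ← Real.rpow_add hε]
    congr 1; ring
  have hεCα2 : ε * Cα^2 = P * A^2 := by
    calc ε * Cα^2 = (ε^(1 - 2*δ) * (ε^δ)^2) * Cα^2 := by rw [← hεsplit2]
      _ = P * A^2 := by rw [hPd, hA]; ring
  have hεCαPA : ε * Cα ≤ P * A := by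
    have t1 : P*A*A ≤ P*A*Cα :=
      mul_le_mul_of_nonneg_left hA1 (mul_nonneg hP0.le hA0.le)
    have t2 : ε*Cα*Cα ≤ P*A*Cα := by linarith only [hεCα2, t1]
    exact le_of_mul_le_mul_right t2 hC
  have he3A : e^3 * Cα^3 ≤ P * A^3 := by
    have h := mul_le_mul_of_nonneg_right h32P
      (mul_nonneg (pow_pos hεδ0 3).le (pow_pos hC 3).le)
    calc e^3*Cα^3 = ε^((3:ℝ)/2 - 3*δ) * ((ε^δ)^3 * Cα^3) := by rw [he3split]; ring
      _ ≤ P * ((ε^δ)^3 * Cα^3) := h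
      _ = P * A^3 := by rw [hA]; ring
  -- μ and λ
  set μ := lam1Zero ε - 1 with hμdef
  clear_value μ
  have hlam : lam1Zero ε = 1 + μ := by rw [hμdef]; ring
  have hμeq : μ = (ε + Real.sqrt (4*ε + ε^2)) / 2 := by
    rw [hμdef, lam1Zero]; ring
  have hsl : 2*e ≤ Real.sqrt (4*ε + ε^2) := by
    have h4 : Real.sqrt (4*ε) = 2*e := by
      rw [show (4:ℝ)*ε = 2^2*ε by ring, Real.sqrt_mul (by norm_num : (0:ℝ) ≤ 2^2) ε,
        Real.sqrt_sq (by norm_num : (0:ℝ) ≤ 2), ← he]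
    rw [← h4]
    exact Real.sqrt_le_sqrt (by linarith only [sq_nonneg ε])
  have hsu : Real.sqrt (4*ε + ε^2) ≤ 2*e + ε := by
    rw [show 2*e + ε = Real.sqrt ((2*e + ε)^2) from
      (Real.sqrt_sq (by linarith : (0:ℝ) ≤ 2*e + ε)).symm]
    exact Real.sqrt_le_sqrt (by nlinarith [mul_pos he0 hε, he2, sq_nonneg ε])
  have hμl : e ≤ μ := by rw [hμeq]; linarith only [hsl, hε]
  have hμu : μ ≤ e + ε := by rw [hμeq]; linarith only [hsu]
  have hμ0 : 0 < μ := lt_of_lt_of_le he0 hμl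
  have hμ2e : μ ≤ 2*e := by linarith only [hμu, hεe]
  have hμ3 : μ^3 ≤ 8*e^3 := by
    have := pow_le_pow_left₀ hμ0.le hμ2e 3
    have h8 : (2*e)^3 = 8*e^3 := by ring
    linarith only [this, h8]
  have hμ2 : μ^2 ≤ 4*ε := by
    have := pow_le_pow_left₀ hμ0.le hμ2e 2
    have h4 : (2*e)^2 = 4*e^2 := by ring
    linarith only [this, h4, he2]
  set D := A + μ + A*μ with hD
  clear_value D
  have hAμ : 0 < A*μ := mul_pos hA0 hμ0
  have hD0 : 0 < D := by rw [hD]; linarith only [hA0, hμ0, hAμ]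
  have hDA : A ≤ D := by rw [hD]; linarith only [hμ0, hAμ]
  have hADne : A + μ + A*μ ≠ 0 :=
    (by linarith only [hA0, hμ0, hAμ] : (0:ℝ) < A + μ + A*μ).ne'
  -- rewrite the goal expression
  have hgoal_eq : ((A + 1 - lam1Zero ε) / ((1 + A) * lam1Zero ε - 1)) ^ 2
      * ((1:ℝ) / (lam1Zero ε) ^ 2) ^ n
      = ((A - μ)/D)^2 * ((1:ℝ)/(1+μ)^2)^n := by
    rw [hlam, hD]; ring_nf
  have htar : 4 / Cα * ε ^ (1 / 2 - δ) = 4*e/A := by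
    rw [Real.rpow_sub hε, ← herpow, hA]
    field_simp
  rw [hgoal_eq, htar]
  set r2 := ((A - μ)/D)^2 with hr2
  set x := (1:ℝ)/(1+μ)^2 with hx
  clear_value r2 x
  have h1μ : (0:ℝ) < (1+μ)^2 := pow_pos (by linarith) 2
  have hx0 : 0 < x := by rw [hx]; exact div_pos one_pos h1μ
  have hx1 : x ≤ 1 := by
    rw [hx, div_le_one h1μ]
    linarith only [sq_nonneg μ, hμ0.le]
  have hr2nn : 0 ≤ r2 := by rw [hr2]; exact sq_nonneg _
  have hr2le1 : r2 ≤ 1 := by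
    rw [hr2, div_pow, div_le_one (pow_pos hD0 2)]
    have q1 : 0 < A*μ := hAμ
    have q2 : 0 ≤ (A*μ)^2 := sq_nonneg _
    have q3 : 0 < A*(A*μ) := mul_pos hA0 hAμ
    have q4 : 0 < μ*(A*μ) := mul_pos hμ0 hAμ
    rw [hD]; linarith only [q1, q2, q3, q4]
  -- piece 1 : |r2 * (x^n - 1)| ≤ 8 n P
  have hXle1 : x^n ≤ 1 := pow_le_one₀ hx0.le hx1
  have hbern : 1 - x^n ≤ (n:ℝ)*(1-x) := by
    have h := one_add_mul_le_pow (a := x - 1) (by linarith : (-2:ℝ) ≤ x - 1) n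
    have h2 : (1:ℝ) + (x - 1) = x := by ring
    rw [h2] at h
    linarith only [h]
  have h1mx : 1 - x ≤ 4*μ := by
    have hq : (1 - 4*μ) * (1+μ)^2 ≤ 1 := by
      linarith only [sq_nonneg μ, pow_pos hμ0 3, hμ0.le]
    have : 1 - 4*μ ≤ x := by
      rw [hx, le_div_iff₀ h1μ]; linarith only [hq]
    linarith only [this, hx0]
  have hn0 : (0:ℝ) ≤ (n:ℝ) := Nat.cast_nonneg n
  have hpiece1 : |r2 * (x^n - 1)| ≤ 8*(n:ℝ)*P := by
    rw [abs_mul, abs_of_nonneg hr2nn, abs_of_nonpos (by linarith : x^n - 1 ≤ 0)]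
    have h1 : 1 - x^n ≤ 4*(n:ℝ)*μ := by
      have hh := mul_le_mul_of_nonneg_left h1mx hn0
      linarith only [hh, hbern]
    have h2 : r2 * (1 - x^n) ≤ 1 * (1 - x^n) :=
      mul_le_mul_of_nonneg_right hr2le1 (by linarith)
    have h3 : μ ≤ 2*P := by linarith
    have hh2 := mul_le_mul_of_nonneg_left h3 (mul_nonneg (by norm_num : (0:ℝ) ≤ 4) hn0)
    linarith only [h1, h2, hh2]
  -- piece 2 : |r2 - (1 - 4μ/A)| ≤ K2 * P
  have hid : r2 - (1 - 4*μ/A)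
      = μ*(4*μ^2*(1+A)^2 + 6*A^2*μ + 8*A*μ - A^3*(2+μ)) / (A*D^2) := by
    rw [hr2, hD]
    field_simp
    ring
  have hAD3 : A^3 ≤ A*D^2 := by
    have h1 : A*A ≤ D*D := mul_le_mul hDA hDA hA0.le hD0.le
    have h2 := mul_le_mul_of_nonneg_left h1 hA0.le
    linarith only [h2]
  have ht1 : μ*(4*μ^2*(1+A)^2) ≤ 32*(1+Cα)^2/Cα^3 * P * A^3 := by
    have hrw : 32*(1+Cα)^2/Cα^3 * P * A^3 = 32*(1+Cα)^2*P*A^3/Cα^3 := by ring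
    rw [hrw, le_div_iff₀ (pow_pos hC 3)]
    have hsq : (1+A)^2 ≤ (1+Cα)^2 :=
      pow_le_pow_left₀ (by linarith) (by linarith) 2
    have key : μ^3 * (1+A)^2 ≤ (8*e^3) * (1+Cα)^2 :=
      mul_le_mul hμ3 hsq (sq_nonneg _) (by linarith only [pow_pos he0 3])
    have key' := mul_le_mul_of_nonneg_right key (pow_pos hC 3).le
    have key2 := mul_le_mul_of_nonneg_left he3A
      (mul_nonneg (by norm_num : (0:ℝ) ≤ 8) (sq_nonneg (1+Cα)))
    linarith only [key', key2]
  have ht2 : μ*(6*A^2*μ) ≤ 24/Cα * P * A^3 := by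
    have hrw : 24/Cα * P * A^3 = 24*P*A^3/Cα := by ring
    rw [hrw, le_div_iff₀ hC]
    have s1 : μ^2*(A^2*Cα) ≤ (4*ε)*(A^2*Cα) :=
      mul_le_mul_of_nonneg_right hμ2 (mul_nonneg (sq_nonneg A) hC.le)
    have s2 : (ε*Cα)*A^2 ≤ (P*A)*A^2 :=
      mul_le_mul_of_nonneg_right hεCαPA (sq_nonneg A)
    linarith only [s1, s2]
  have ht3 : μ*(8*A*μ) ≤ 32/Cα^2 * P * A^3 := by
    have hrw : 32/Cα^2 * P * A^3 = 32*P*A^3/Cα^2 := by ring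
    rw [hrw, le_div_iff₀ (pow_pos hC 2)]
    have s1 : μ^2*(A*Cα^2) ≤ (4*ε)*(A*Cα^2) :=
      mul_le_mul_of_nonneg_right hμ2 (mul_nonneg hA0.le (sq_nonneg Cα))
    have s2 : (ε*Cα^2)*A = (P*A^2)*A := by rw [hεCα2]
    linarith only [s1, s2]
  have ht4 : μ*(A^3*(2+μ)) ≤ 8 * P * A^3 := by
    have h1 : μ*(2+μ) ≤ 8*e := by
      have hm := mul_le_mul hμ2e (by linarith : 2+μ ≤ 2+2*e) (by linarith) (by linarith)
      linarith only [hm, he2, hεe]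
    have h3 : (μ*(2+μ))*A^3 ≤ (8*P)*A^3 := by
      have h2 : μ*(2+μ) ≤ 8*P := by linarith only [h1, heP]
      exact mul_le_mul_of_nonneg_right h2 (pow_pos hA0 3).le
    linarith only [h3]
  have hpiece2 : |r2 - (1 - 4*μ/A)|
      ≤ (32*(1+Cα)^2/Cα^3 + 24/Cα + 32/Cα^2 + 8) * P := by
    have hADsq : (0:ℝ) < A*D^2 := mul_pos hA0 (pow_pos hD0 2)
    rw [hid, abs_div, abs_of_pos hADsq, div_le_iff₀ hADsq]
    have q1 : 0 ≤ μ^2*(1+A)^2 := mul_nonneg (sq_nonneg μ) (sq_nonneg (1+A))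
    have q2 : 0 ≤ A^2*μ := mul_nonneg (sq_nonneg A) hμ0.le
    have q3 : 0 ≤ A*μ := hAμ.le
    have q4 : 0 ≤ A^3*(2+μ) := mul_nonneg (pow_pos hA0 3).le (by linarith)
    have habs : |μ*(4*μ^2*(1+A)^2 + 6*A^2*μ + 8*A*μ - A^3*(2+μ))|
        ≤ μ*(4*μ^2*(1+A)^2) + μ*(6*A^2*μ) + μ*(8*A*μ) + μ*(A^3*(2+μ)) := by
      rw [abs_mul, abs_of_pos hμ0]
      have h : |4*μ^2*(1+A)^2 + 6*A^2*μ + 8*A*μ - A^3*(2+μ)|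
          ≤ 4*μ^2*(1+A)^2 + 6*A^2*μ + 8*A*μ + A^3*(2+μ) := by
        rw [abs_le]; constructor <;> linarith only [q1, q2, q3, q4]
      calc μ * |4*μ^2*(1+A)^2 + 6*A^2*μ + 8*A*μ - A^3*(2+μ)|
          ≤ μ * (4*μ^2*(1+A)^2 + 6*A^2*μ + 8*A*μ + A^3*(2+μ)) :=
            mul_le_mul_of_nonneg_left h hμ0.le
        _ = μ*(4*μ^2*(1+A)^2) + μ*(6*A^2*μ) + μ*(8*A*μ) + μ*(A^3*(2+μ)) := by ring
    have hsum : μ*(4*μ^2*(1+A)^2) + μ*(6*A^2*μ) + μ*(8*A*μ) + μ*(A^3*(2+μ))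
        ≤ (32*(1+Cα)^2/Cα^3 + 24/Cα + 32/Cα^2 + 8) * P * A^3 := by
      linarith only [ht1, ht2, ht3, ht4]
    have hfin : (32*(1+Cα)^2/Cα^3 + 24/Cα + 32/Cα^2 + 8) * P * A^3
        ≤ (32*(1+Cα)^2/Cα^3 + 24/Cα + 32/Cα^2 + 8) * P * (A*D^2) :=
      mul_le_mul_of_nonneg_left hAD3 (mul_pos hK2pos hP0).le
    linarith only [habs, hsum, hfin]
  -- piece 3 : |4μ/A - 4e/A| ≤ 4/Cα * P
  have hpiece3 : |4*e/A - 4*μ/A| ≤ 4/Cα * P := by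
    rw [abs_sub_comm]
    have hnn : 0 ≤ 4*μ/A - 4*e/A := by
      rw [sub_nonneg]
      exact (div_le_div_iff_of_pos_right hA0).mpr (by linarith : 4*e ≤ 4*μ)
    rw [abs_of_nonneg hnn]
    have h1 : 4*μ/A - 4*e/A = 4*(μ - e)/A := by ring
    have hrw : 4/Cα * P = 4*P/Cα := by ring
    rw [h1, hrw, div_le_div_iff₀ hA0 hC]
    have h2 : μ - e ≤ ε := by linarith
    have h3 : (μ-e)*Cα ≤ ε*Cα := mul_le_mul_of_nonneg_right h2 hC.le
    have h4 := mul_le_mul_of_nonneg_left hεCαPA (by norm_num : (0:ℝ) ≤ 4)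
    linarith only [h3, h4]
  -- assemble
  have hsplit : r2 * x^n - (1 - 4*e/A)
      = r2*(x^n - 1) + (r2 - (1 - 4*μ/A)) + (4*e/A - 4*μ/A) := by ring
  rw [hsplit]
  calc |r2*(x^n - 1) + (r2 - (1 - 4*μ/A)) + (4*e/A - 4*μ/A)|
      ≤ |r2*(x^n - 1) + (r2 - (1 - 4*μ/A))| + |4*e/A - 4*μ/A| := abs_add_le _ _
    _ ≤ |r2*(x^n - 1)| + |r2 - (1 - 4*μ/A)| + |4*e/A - 4*μ/A| := by
        have := abs_add_le (r2*(x^n - 1)) (r2 - (1 - 4*μ/A))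
        linarith
    _ ≤ 8*(n:ℝ)*P + (32*(1+Cα)^2/Cα^3 + 24/Cα + 32/Cα^2 + 8)*P + 4/Cα*P := by
        linarith only [hpiece1, hpiece2, hpiece3]
    _ = (8*(n:ℝ) + (32*(1+Cα)^2/Cα^3 + 24/Cα + 32/Cα^2 + 8) + 4/Cα) * P := by ring
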